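/- The performance operator is block diagonal with respect to the projections P and P′: D = P·D·P + P′·D·P′. (Identity used in the proof of Lemma 2 of the paper.) -/

import Mathlib

open Matrix Kronecker Complex Filter
open scoped ComplexOrder

noncomputable section

/-- Outer product `v vᴴ`. -/
def outer {ι : Type*} [Fintype ι] (v : ι → ℂ) : Matrix ι ι ℂ :=
  Matrix.vecMulVec v (star v)

/-- The conjugated memory states `ψ*₀ = (e^{-inα}, e^{inα})/√2`, `ψ*₁ = (e^{inα}, e^{-inα})/√2`. -/
def psiStar (n : ℕ) (α : ℝ) (i : Fin 2) : Fin 2 → ℂ :=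
  if i = 0 then
    ((Real.sqrt 2 : ℂ))⁻¹ • ![Complex.exp (-(Complex.I * n * α)), Complex.exp (Complex.I * n * α)]
  else
    ((Real.sqrt 2 : ℂ))⁻¹ • ![Complex.exp (Complex.I * n * α), Complex.exp (-(Complex.I * n * α))]

/-- `|U⟩⟩ = (e^{iε},0,0,e^{-iε})` in `ℂ^{Fin 2 × Fin 2}`. -/
def Uket (ε : ℝ) : Fin 2 × Fin 2 → ℂ := fun p =>
  if p = (0, 0) then Complex.exp (Complex.I * ε)
  else if p = (1, 1) then Complex.exp (-(Complex.I * ε)) else 0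

/-- `|U₀⟩⟩` and `|U₁⟩⟩`. -/
def Ui (α : ℝ) (i : Fin 2) : Fin 2 × Fin 2 → ℂ :=
  if i = 0 then Uket α else Uket (-α)

/-- The performance operator `D = (1/8) ∑ᵢ (ψ*ᵢ ψ*ᵢᴴ) ⊗ₖ |Uᵢ⟩⟩⟨⟨Uᵢ|`. -/
def Dop (n : ℕ) (α : ℝ) : Matrix (Fin 2 × Fin 2 × Fin 2) (Fin 2 × Fin 2 × Fin 2) ℂ :=
  (1/8 : ℂ) • ∑ i : Fin 2, (outer (psiStar n α i)) ⊗ₖ (outer (Ui α i))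

/-- Tensor product of a vector in `ℂ²` with a vector in `ℂ^{Fin 2 × Fin 2}`. -/
def tv (v : Fin 2 → ℂ) (w : Fin 2 × Fin 2 → ℂ) : Fin 2 × Fin 2 × Fin 2 → ℂ :=
  fun p => v p.1 * w p.2

/-- `|+⟩ = (1,1)/√2`. -/
def plusV : Fin 2 → ℂ := ((Real.sqrt 2 : ℂ))⁻¹ • ![1, 1]

/-- `|−⟩ = (1,−1)/√2`. -/
def minusV : Fin 2 → ℂ := ((Real.sqrt 2 : ℂ))⁻¹ • ![1, -1]

/-- `|I⟩⟩ = (1,0,0,1)`. -/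
def Iket : Fin 2 × Fin 2 → ℂ := fun p =>
  if p = (0, 0) then 1 else if p = (1, 1) then 1 else 0

/-- `|σz⟩⟩ = (1,0,0,−1)`. -/
def Zket : Fin 2 × Fin 2 → ℂ := fun p =>
  if p = (0, 0) then 1 else if p = (1, 1) then -1 else 0

/-- `e₁ = |+⟩⊗|I⟩⟩`, `e₂ = |−⟩⊗|σz⟩⟩`. -/
def eV (i : Fin 2) : Fin 2 × Fin 2 × Fin 2 → ℂ :=
  if i = 0 then tv plusV Iket else tv minusV Zket

/-- `e₁′ = |+⟩⊗|σz⟩⟩`, `e₂′ = |−⟩⊗|I⟩⟩`. -/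
def eV' (i : Fin 2) : Fin 2 × Fin 2 × Fin 2 → ℂ :=
  if i = 0 then tv plusV Zket else tv minusV Iket

/-- The projection `P = (1/2)(e₁e₁ᴴ + e₂e₂ᴴ)`. -/
def Pproj : Matrix (Fin 2 × Fin 2 × Fin 2) (Fin 2 × Fin 2 × Fin 2) ℂ :=
  (1/2 : ℂ) • (Matrix.vecMulVec (eV 0) (star (eV 0)) + Matrix.vecMulVec (eV 1) (star (eV 1)))

/-- The projection `P′ = (1/2)(e₁′(e₁′)ᴴ + e₂′(e₂′)ᴴ)`. -/
def Pproj' : Matrix (Fin 2 × Fin 2 × Fin 2) (Fin 2 × Fin 2 × Fin 2) ℂ :=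
  (1/2 : ℂ) • (Matrix.vecMulVec (eV' 0) (star (eV' 0)) + Matrix.vecMulVec (eV' 1) (star (eV' 1)))

/-! Write `wᵢ = ψ*ᵢ ⊗ |Uᵢ⟩⟩`. The product-to-sum formulas give `w₀ = u + v` and `w₁ = u - v`
with `u ∈ span {e₁, e₂}` and `v ∈ span {e₁′, e₂′}`, so the cross terms cancel in
`D = (1/8)(w₀w₀ᴴ + w₁w₁ᴴ) = (1/4)(uuᴴ + vvᴴ)`. As `e₁, e₂, e₁′, e₂′` are orthogonal of squared
norm 2, `P` fixes `u` and kills `v` while `P′` does the opposite, whence `PDP = uuᴴ/4` and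
`P′DP′ = vvᴴ/4`. -/

section Outer

variable {ι : Type*} [Fintype ι]

@[simp]
theorem outer_zero : outer (0 : ι → ℂ) = 0 := by
  simp [outer]

theorem outer_add_add_outer_sub (u v : ι → ℂ) :
    outer (u + v) + outer (u - v) = (2 : ℂ) • (outer u + outer v) := by
  ext i j
  simp only [outer, Matrix.add_apply, Matrix.smul_apply, vecMulVec_apply, Pi.add_apply,
    Pi.sub_apply, star_add, star_sub, Pi.star_apply, smul_eq_mul]
  ring

theorem conjTranspose_outer (u : ι → ℂ) : (outer u)ᴴ = outer u := by
  rw [outer, conjTranspose_vecMulVec, star_star]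

theorem outer_mulVec (u f : ι → ℂ) : outer u *ᵥ f = (star u ⬝ᵥ f) • u := by
  rw [outer, vecMulVec_mulVec, op_smul_eq_smul]

theorem mul_outer_mul_of_conjTranspose_eq {P : Matrix ι ι ℂ} (hP : Pᴴ = P) (u : ι → ℂ) :
    P * outer u * P = outer (P *ᵥ u) := by
  rw [outer, mul_vecMulVec, vecMulVec_mul, outer, star_mulVec, hP]

theorem mul_smul_outer_add_outer_mul {P : Matrix ι ι ℂ} (hP : Pᴴ = P) (c : ℂ) (u v : ι → ℂ) :
    P * (c • (outer u + outer v)) * P = c • (outer (P *ᵥ u) + outer (P *ᵥ v)) := by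
  rw [Matrix.mul_smul, Matrix.smul_mul, mul_add, add_mul, mul_outer_mul_of_conjTranspose_eq hP,
    mul_outer_mul_of_conjTranspose_eq hP]

end Outer

theorem kronecker_outer (a : Fin 2 → ℂ) (b : Fin 2 × Fin 2 → ℂ) :
    outer a ⊗ₖ outer b = outer (tv a b) := by
  ext ⟨i, p⟩ ⟨j, q⟩
  simp only [outer, kroneckerMap_apply, vecMulVec_apply, tv, Pi.star_apply, star_mul']
  ring

theorem inv_sqrt_two_mul_self : ((Real.sqrt 2 : ℂ))⁻¹ * ((Real.sqrt 2 : ℂ))⁻¹ = 2⁻¹ := by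
  rw [← mul_inv, ← Complex.ofReal_mul, Real.mul_self_sqrt zero_le_two]
  norm_num

theorem star_eV_dotProduct_eV (i j : Fin 2) :
    star (eV i) ⬝ᵥ eV j = if i = j then 2 else 0 := by
  fin_cases i <;> fin_cases j <;>
    simp [dotProduct, Fintype.sum_prod_type, eV, tv, plusV, minusV, Iket, Zket,
      inv_sqrt_two_mul_self] <;> norm_num

theorem star_eV_dotProduct_eV' (i j : Fin 2) : star (eV i) ⬝ᵥ eV' j = 0 := by
  fin_cases i <;> fin_cases j <;>
    simp [dotProduct, Fintype.sum_prod_type, eV, eV', tv, plusV, minusV, Iket, Zket]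

theorem star_eV'_dotProduct_eV (i j : Fin 2) : star (eV' i) ⬝ᵥ eV j = 0 := by
  fin_cases i <;> fin_cases j <;>
    simp [dotProduct, Fintype.sum_prod_type, eV, eV', tv, plusV, minusV, Iket, Zket]

theorem star_eV'_dotProduct_eV' (i j : Fin 2) :
    star (eV' i) ⬝ᵥ eV' j = if i = j then 2 else 0 := by
  fin_cases i <;> fin_cases j <;>
    simp [dotProduct, Fintype.sum_prod_type, eV', tv, plusV, minusV, Iket, Zket,
      inv_sqrt_two_mul_self] <;> norm_num

theorem Pproj_eq : Pproj = (1/2 : ℂ) • (outer (eV 0) + outer (eV 1)) := rfl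

theorem Pproj'_eq : Pproj' = (1/2 : ℂ) • (outer (eV' 0) + outer (eV' 1)) := rfl

theorem conjTranspose_Pproj : Pprojᴴ = Pproj := by
  rw [Pproj_eq, conjTranspose_smul, conjTranspose_add, conjTranspose_outer, conjTranspose_outer]
  norm_num

theorem conjTranspose_Pproj' : Pproj'ᴴ = Pproj' := by
  rw [Pproj'_eq, conjTranspose_smul, conjTranspose_add, conjTranspose_outer, conjTranspose_outer]
  norm_num

theorem Pproj_mulVec_eV (j : Fin 2) : Pproj *ᵥ eV j = eV j := by
  rw [Pproj_eq, smul_mulVec, add_mulVec, outer_mulVec, outer_mulVec, star_eV_dotProduct_eV,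
    star_eV_dotProduct_eV]
  fin_cases j <;> simp [smul_smul]

theorem Pproj_mulVec_eV' (j : Fin 2) : Pproj *ᵥ eV' j = 0 := by
  rw [Pproj_eq, smul_mulVec, add_mulVec, outer_mulVec, outer_mulVec, star_eV_dotProduct_eV',
    star_eV_dotProduct_eV']
  simp

theorem Pproj'_mulVec_eV (j : Fin 2) : Pproj' *ᵥ eV j = 0 := by
  rw [Pproj'_eq, smul_mulVec, add_mulVec, outer_mulVec, outer_mulVec, star_eV'_dotProduct_eV,
    star_eV'_dotProduct_eV]
  simp

theorem Pproj'_mulVec_eV' (j : Fin 2) : Pproj' *ᵥ eV' j = eV' j := by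
  rw [Pproj'_eq, smul_mulVec, add_mulVec, outer_mulVec, outer_mulVec, star_eV'_dotProduct_eV',
    star_eV'_dotProduct_eV']
  fin_cases j <;> simp [smul_smul]

theorem exp_I_mul (t : ℂ) : exp (I * t) = cos t + I * sin t := by
  rw [mul_comm, exp_mul_I, mul_comm I]

theorem exp_neg_I_mul (t : ℂ) : exp (-(I * t)) = cos t - I * sin t := by
  rw [← mul_neg, exp_I_mul, cos_neg, sin_neg, mul_neg, sub_eq_add_neg]

def partP (n : ℕ) (α : ℝ) : Fin 2 × Fin 2 × Fin 2 → ℂ :=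
  (cos α * cos (n * α)) • eV 0 + (sin α * sin (n * α)) • eV 1

def partP' (n : ℕ) (α : ℝ) : Fin 2 × Fin 2 × Fin 2 → ℂ :=
  (I * sin α * cos (n * α)) • eV' 0 - (I * cos α * sin (n * α)) • eV' 1

theorem Pproj_mulVec_partP (n : ℕ) (α : ℝ) : Pproj *ᵥ partP n α = partP n α := by
  simp [partP, mulVec_add, mulVec_smul, Pproj_mulVec_eV]

theorem Pproj_mulVec_partP' (n : ℕ) (α : ℝ) : Pproj *ᵥ partP' n α = 0 := by
  simp [partP', mulVec_sub, mulVec_smul, Pproj_mulVec_eV']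

theorem Pproj'_mulVec_partP (n : ℕ) (α : ℝ) : Pproj' *ᵥ partP n α = 0 := by
  simp [partP, mulVec_add, mulVec_smul, Pproj'_mulVec_eV]

theorem Pproj'_mulVec_partP' (n : ℕ) (α : ℝ) : Pproj' *ᵥ partP' n α = partP' n α := by
  simp [partP', mulVec_sub, mulVec_smul, Pproj'_mulVec_eV']

theorem tv_psiStar_zero_eq (n : ℕ) (α : ℝ) :
    tv (psiStar n α 0) (Ui α 0) = partP n α + partP' n α := by
  funext ⟨i, j, k⟩
  fin_cases i <;> fin_cases j <;> fin_cases k <;>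
    simp [tv, psiStar, Ui, Uket, partP, partP', eV, eV', plusV, minusV, Iket, Zket, mul_assoc,
      exp_I_mul, exp_neg_I_mul] <;> ring_nf <;> simp only [I_sq] <;> ring

theorem tv_psiStar_one_eq (n : ℕ) (α : ℝ) :
    tv (psiStar n α 1) (Ui α 1) = partP n α - partP' n α := by
  funext ⟨i, j, k⟩
  fin_cases i <;> fin_cases j <;> fin_cases k <;>
    simp [tv, psiStar, Ui, Uket, partP, partP', eV, eV', plusV, minusV, Iket, Zket, mul_assoc,
      exp_I_mul, exp_neg_I_mul] <;> ring_nf <;> simp only [I_sq] <;> ring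

theorem Dop_eq (n : ℕ) (α : ℝ) :
    Dop n α = (1/4 : ℂ) • (outer (partP n α) + outer (partP' n α)) := by
  rw [Dop, Fin.sum_univ_two, kronecker_outer, kronecker_outer, tv_psiStar_zero_eq,
    tv_psiStar_one_eq, outer_add_add_outer_sub, smul_smul]
  norm_num

theorem performance_operator_block_diagonal_general (n : ℕ) (α : ℝ) :
    Dop n α = Pproj * Dop n α * Pproj + Pproj' * Dop n α * Pproj' := by
  rw [Dop_eq, mul_smul_outer_add_outer_mul conjTranspose_Pproj,
    mul_smul_outer_add_outer_mul conjTranspose_Pproj', Pproj_mulVec_partP, Pproj_mulVec_partP',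
    Pproj'_mulVec_partP, Pproj'_mulVec_partP', outer_zero, add_zero, zero_add, ← smul_add]

theorem performance_operator_block_diagonal (n : ℕ) (hn : 1 ≤ n) (α : ℝ) (hα : 0 < α)
    (hdist : 4 * n * α < Real.pi) :
    Dop n α = Pproj * Dop n α * Pproj + Pproj' * Dop n α * Pproj' :=
  performance_operator_block_diagonal_general n α

end
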